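/- Suppose Y and Y* are vectors in R^r that differ only in the last coordinate, with Y_r - Y*_r = ε_r - ε*_r. Let β̂ and β̂* be the Lasso solutions (constrained least squares over the ℓ1-ball of radius K) for (X, Y) and (X, Y*) respectively, and suppose X satisfies the restricted eigenvalue condition with constant κ > 0 applied to Δ = β̂ - β̂*, i.e., (1/r)||XΔ||_2^2 ≥ κ||Δ||_2^2, and suppose ||Δ||_1 ≤ 4√s ||Δ||_2. Then ||β̂ - β̂*||_2 ≤ (4√s / (κ r)) |ε_r - ε*_r| · ||x_r||_∞, where x_r is the r-th row of X. -/
import Mathlib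


open Finset

/-- ℓ1 norm of a finite-dimensional real vector. -/
noncomputable def l1norm {p : ℕ} (v : Fin p → ℝ) : ℝ := ∑ j, |v j|

/-- ℓ2 norm of a finite-dimensional real vector. -/
noncomputable def l2norm {k : ℕ} (v : Fin k → ℝ) : ℝ := Real.sqrt (∑ i, (v i) ^ 2)

/-- ℓ∞ norm of a finite-dimensional real vector. -/
noncomputable def linfnorm {p : ℕ} (v : Fin p → ℝ) : ℝ := ⨆ j, |v j|

lemma l1_convex {p : ℕ} (u v : Fin p → ℝ) (t : ℝ) (ht0 : 0 ≤ t) (ht1 : t ≤ 1) :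
    l1norm (fun j => u j + t * (v j - u j)) ≤ (1 - t) * l1norm u + t * l1norm v := by
  unfold l1norm
  rw [Finset.mul_sum, Finset.mul_sum, ← Finset.sum_add_distrib]
  apply Finset.sum_le_sum
  intro j _
  have h : u j + t * (v j - u j) = (1 - t) * u j + t * v j := by ring
  show |u j + t * (v j - u j)| ≤ _
  rw [h]
  calc |(1 - t) * u j + t * v j| ≤ |(1 - t) * u j| + |t * v j| := abs_add_le _ _
    _ = (1 - t) * |u j| + t * |v j| := by
        rw [abs_mul, abs_mul, abs_of_nonneg (by linarith), abs_of_nonneg ht0]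

lemma var_ineq {r p : ℕ} (X : Matrix (Fin r) (Fin p) ℝ) (Y : Fin r → ℝ) (K : ℝ)
    (βh β : Fin p → ℝ) (hK : l1norm βh ≤ K) (hK' : l1norm β ≤ K)
    (hmin : ∀ γ : Fin p → ℝ, l1norm γ ≤ K →
      ∑ i, (Y i - X.mulVec βh i) ^ 2 ≤ ∑ i, (Y i - X.mulVec γ i) ^ 2) :
    ∑ i, (Y i - X.mulVec βh i) * (X.mulVec β i - X.mulVec βh i) ≤ 0 := by
  set a := ∑ i, (Y i - X.mulVec βh i) * (X.mulVec β i - X.mulVec βh i) with ha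
  set b := ∑ i, (X.mulVec β i - X.mulVec βh i) ^ 2 with hb
  have hb0 : 0 ≤ b := Finset.sum_nonneg fun i _ => sq_nonneg _
  have key : ∀ t : ℝ, 0 ≤ t → t ≤ 1 → 2 * t * a ≤ t ^ 2 * b := by
    intro t ht0 ht1
    have hfeas : l1norm (fun j => βh j + t * (β j - βh j)) ≤ K := by
      calc l1norm (fun j => βh j + t * (β j - βh j))
          ≤ (1 - t) * l1norm βh + t * l1norm β := l1_convex βh β t ht0 ht1
        _ ≤ (1 - t) * K + t * K := by
            apply add_le_add
            · exact mul_le_mul_of_nonneg_left hK (by linarith)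
            · exact mul_le_mul_of_nonneg_left hK' ht0
        _ = K := by ring
    have hmv : ∀ i, X.mulVec (fun j => βh j + t * (β j - βh j)) i
        = X.mulVec βh i + t * (X.mulVec β i - X.mulVec βh i) := by
      intro i
      simp only [Matrix.mulVec, dotProduct]
      rw [← Finset.sum_sub_distrib, Finset.mul_sum, ← Finset.sum_add_distrib]
      apply Finset.sum_congr rfl
      intro j _
      ring
    have h := hmin (fun j => βh j + t * (β j - βh j)) hfeas
    have hexp : ∑ i, (Y i - X.mulVec (fun j => βh j + t * (β j - βh j)) i) ^ 2
        = ∑ i, (Y i - X.mulVec βh i) ^ 2 - 2 * t * a + t ^ 2 * b := by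
      rw [ha, hb, Finset.mul_sum, Finset.mul_sum, ← Finset.sum_sub_distrib,
        ← Finset.sum_add_distrib]
      apply Finset.sum_congr rfl
      intro i _
      rw [hmv i]
      ring
    rw [hexp] at h
    linarith
  by_contra hc
  push_neg at hc
  rcases eq_or_lt_of_le hb0 with hb1 | hb1
  · have := key 1 zero_le_one le_rfl
    rw [← hb1] at this
    nlinarith
  · have ht0 : (0:ℝ) < min 1 (a / b) := by
      apply lt_min one_pos
      exact div_pos hc hb1
    have h := key (min 1 (a / b)) ht0.le (min_le_left _ _)
    have h2 : 2 * a ≤ min 1 (a / b) * b := by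
      have := mul_le_mul_of_nonneg_left h (le_of_lt (by positivity : (0:ℝ) < (min 1 (a/b))⁻¹))
      calc 2 * a = (min 1 (a/b))⁻¹ * (2 * (min 1 (a/b)) * a) := by
            field_simp
        _ ≤ (min 1 (a/b))⁻¹ * ((min 1 (a/b)) ^ 2 * b) := this
        _ = min 1 (a/b) * b := by
            field_simp
    have h3 : min 1 (a / b) * b ≤ (a / b) * b :=
      mul_le_mul_of_nonneg_right (min_le_right _ _) hb0
    rw [div_mul_cancel₀ _ (ne_of_gt hb1)] at h3
    linarith

/-- Lasso stability.  The responses `Y` and `Y*` (length `r = m+1`) differ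
only in the last coordinate, with `Y_r - Y*_r = ε_r - ε*_r`.  `β̂`, `β̂*` are the Lasso
solutions (constrained least squares over the ℓ1-ball of radius `K`) for `(X, Y)` and
`(X, Y*)`.  If `X` satisfies the restricted eigenvalue condition with constant `κ > 0`
applied to `Δ = β̂ - β̂*`, i.e. `(1/r)‖XΔ‖₂² ≥ κ‖Δ‖₂²`, and `‖Δ‖₁ ≤ 4√s ‖Δ‖₂`, then
`‖β̂ - β̂*‖₂ ≤ (4√s / (κ r)) |ε_r - ε*_r| ‖x_r‖_∞`, `x_r` being the last row of `X`. -/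
theorem lasso_stability (m p : ℕ) (X : Matrix (Fin (m + 1)) (Fin p) ℝ)
    (Y Ystar : Fin (m + 1) → ℝ) (K κ s εr εrstar : ℝ) (hκ : 0 < κ) (hs : 0 ≤ s)
    (hdiff : ∀ i : Fin (m + 1), i ≠ Fin.last m → Y i = Ystar i)
    (hlast : Y (Fin.last m) - Ystar (Fin.last m) = εr - εrstar)
    (βhat βhatstar : Fin p → ℝ)
    (hβK : l1norm βhat ≤ K)
    (hβmin : ∀ β : Fin p → ℝ, l1norm β ≤ K →
      ∑ i, (Y i - X.mulVec βhat i) ^ 2 ≤ ∑ i, (Y i - X.mulVec β i) ^ 2)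
    (hβK' : l1norm βhatstar ≤ K)
    (hβmin' : ∀ β : Fin p → ℝ, l1norm β ≤ K →
      ∑ i, (Ystar i - X.mulVec βhatstar i) ^ 2 ≤ ∑ i, (Ystar i - X.mulVec β i) ^ 2)
    (hRE : κ * (l2norm (fun j => βhat j - βhatstar j)) ^ 2 ≤
      (1 / (m + 1 : ℝ)) * ∑ i, (X.mulVec (fun j => βhat j - βhatstar j) i) ^ 2)
    (hcone : l1norm (fun j => βhat j - βhatstar j) ≤
      4 * Real.sqrt s * l2norm (fun j => βhat j - βhatstar j)) :
    l2norm (fun j => βhat j - βhatstar j) ≤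
      (4 * Real.sqrt s / (κ * (m + 1 : ℝ))) * |εr - εrstar| *
        linfnorm (fun j => X (Fin.last m) j) := by
  set Δ : Fin p → ℝ := fun j => βhat j - βhatstar j with hΔ
  set D := l2norm Δ with hD
  set M := linfnorm (fun j => X (Fin.last m) j) with hM
  set e := |εr - εrstar| with he
  have hr : (0:ℝ) < (m + 1 : ℝ) := by positivity
  have hD0 : 0 ≤ D := Real.sqrt_nonneg _
  have hM0 : 0 ≤ M := Real.iSup_nonneg fun j => abs_nonneg _
  have he0 : 0 ≤ e := abs_nonneg _
  have hsq : 0 ≤ Real.sqrt s := Real.sqrt_nonneg _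
  -- mulVec of difference
  have hmvd : ∀ i, X.mulVec Δ i = X.mulVec βhat i - X.mulVec βhatstar i := by
    intro i
    simp only [Matrix.mulVec, dotProduct, hΔ]
    rw [← Finset.sum_sub_distrib]
    apply Finset.sum_congr rfl
    intro j _
    ring
  have h1 := var_ineq X Y K βhat βhatstar hβK hβK' hβmin
  have h2 := var_ineq X Ystar K βhatstar βhat hβK' hβK hβmin'
  -- ∑ d² ≤ ∑ (Y - Ystar) d
  have hkey : ∑ i, (X.mulVec Δ i) ^ 2 ≤ ∑ i, (Y i - Ystar i) * X.mulVec Δ i := by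
    have h3 : ∑ i, ((Y i - X.mulVec βhat i) * (X.mulVec βhatstar i - X.mulVec βhat i)
        + (Ystar i - X.mulVec βhatstar i) * (X.mulVec βhat i - X.mulVec βhatstar i)) ≤ 0 := by
      rw [Finset.sum_add_distrib]; linarith
    have h4 : ∑ i, ((Y i - X.mulVec βhat i) * (X.mulVec βhatstar i - X.mulVec βhat i)
        + (Ystar i - X.mulVec βhatstar i) * (X.mulVec βhat i - X.mulVec βhatstar i))
        = ∑ i, ((X.mulVec Δ i) ^ 2 - (Y i - Ystar i) * X.mulVec Δ i) := by
      apply Finset.sum_congr rfl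
      intro i _
      rw [hmvd i]
      ring
    rw [h4, Finset.sum_sub_distrib] at h3
    linarith
  -- only the last term survives
  have hsingle : ∑ i, (Y i - Ystar i) * X.mulVec Δ i
      = (εr - εrstar) * X.mulVec Δ (Fin.last m) := by
    rw [Finset.sum_eq_single (Fin.last m)]
    · rw [hlast]
    · intro i _ hi
      rw [hdiff i hi]; ring
    · intro h; exact absurd (Finset.mem_univ _) h
  -- Hölder-type bound on the last coordinate
  have hholder : (εr - εrstar) * X.mulVec Δ (Fin.last m) ≤ e * (M * l1norm Δ) := by
    calc (εr - εrstar) * X.mulVec Δ (Fin.last m)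
        ≤ |(εr - εrstar) * X.mulVec Δ (Fin.last m)| := le_abs_self _
      _ = e * |X.mulVec Δ (Fin.last m)| := by rw [abs_mul]
      _ ≤ e * (M * l1norm Δ) := by
          apply mul_le_mul_of_nonneg_left _ he0
          calc |X.mulVec Δ (Fin.last m)| = |∑ j, X (Fin.last m) j * Δ j| := by
                simp [Matrix.mulVec, dotProduct]
            _ ≤ ∑ j, |X (Fin.last m) j * Δ j| := Finset.abs_sum_le_sum_abs _ _
            _ ≤ ∑ j, M * |Δ j| := by
                apply Finset.sum_le_sum
                intro j _
                rw [abs_mul]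
                apply mul_le_mul_of_nonneg_right _ (abs_nonneg _)
                show |X (Fin.last m) j| ≤ linfnorm (fun j => X (Fin.last m) j)
                rw [linfnorm]
                exact le_ciSup (f := fun j' => |X (Fin.last m) j'|) (Set.Finite.bddAbove (Set.finite_range _)) j
            _ = M * l1norm Δ := by rw [l1norm, Finset.mul_sum]
  have hchain : κ * D ^ 2 ≤ (1 / (m + 1 : ℝ)) * (e * (M * (4 * Real.sqrt s * D))) := by
    calc κ * D ^ 2 ≤ (1 / (m + 1 : ℝ)) * ∑ i, (X.mulVec Δ i) ^ 2 := hRE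
      _ ≤ (1 / (m + 1 : ℝ)) * (e * (M * l1norm Δ)) := by
          apply mul_le_mul_of_nonneg_left _ (by positivity)
          calc ∑ i, (X.mulVec Δ i) ^ 2 ≤ ∑ i, (Y i - Ystar i) * X.mulVec Δ i := hkey
            _ = (εr - εrstar) * X.mulVec Δ (Fin.last m) := hsingle
            _ ≤ e * (M * l1norm Δ) := hholder
      _ ≤ (1 / (m + 1 : ℝ)) * (e * (M * (4 * Real.sqrt s * D))) := by
          apply mul_le_mul_of_nonneg_left _ (by positivity)
          apply mul_le_mul_of_nonneg_left _ he0
          exact mul_le_mul_of_nonneg_left hcone hM0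
  rcases eq_or_lt_of_le hD0 with hD1 | hD1
  · rw [← hD1]
    positivity
  · rw [div_mul_eq_mul_div, div_mul_eq_mul_div, le_div_iff₀ (by positivity)]
    have h5 : κ * ((m+1:ℝ) * D ^ 2) ≤ e * (M * (4 * Real.sqrt s * D)) := by
      have := mul_le_mul_of_nonneg_left hchain (le_of_lt hr)
      calc κ * ((m+1:ℝ) * D ^ 2) = (m+1:ℝ) * (κ * D ^ 2) := by ring
        _ ≤ (m+1:ℝ) * ((1 / (m + 1 : ℝ)) * (e * (M * (4 * Real.sqrt s * D)))) := this
        _ = e * (M * (4 * Real.sqrt s * D)) := by field_simp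
    nlinarith [mul_pos hD1 hD1]
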